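/- With λ(θ) and f(θ) = -log λ(θ) - 2θ - θ log(1-4λ(θ)) as above, f'' = 4λ'/(1-4λ) and θ f'' = 2 + λ'/λ hold for all θ > 0. -/

import Mathlib

open Real Filter Set

noncomputable def artanh (x : ℝ) : ℝ := (1/2) * Real.log ((1+x)/(1-x))

noncomputable def thetaF (l : ℝ) : ℝ := -1 + _root_.artanh (Real.sqrt (1-4*l)) / Real.sqrt (1-4*l)

/-!
The substitution `s = √(1 - 4l)` turns `thetaF l` into `artanh s / s - 1`. The bounds
`s < artanh s < s / (1 - s²)` on `(0, 1)` make `thetaF` positive and strictly decreasing on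
`(0, 1/4)`, so `λ` is a continuous, hence differentiable, inverse of it, and the inverse function
rule gives `λ' (4λ(θ + 1) - 1) = 2λ(1 - 4λ)`. This identity is exactly what makes the
`λ'`-terms of `f'` cancel, leaving `f' = -log (1 - 4λ)`; differentiating once more gives
`f'' = 4λ'/(1 - 4λ)`, and the same identity turns `θ f''` into `2 + λ'/λ`.
-/

lemma strictMonoOn_Ico_of_hasDerivAt_pos {g g' : ℝ → ℝ} {a b : ℝ}
    (hg : ∀ x ∈ Ico a b, HasDerivAt g (g' x) x) (hg' : ∀ x ∈ Ioo a b, 0 < g' x) :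
    StrictMonoOn g (Ico a b) := by
  refine strictMonoOn_of_hasDerivWithinAt_pos (f' := g') (convex_Ico a b)
    (fun x hx => (hg x hx).continuousAt.continuousWithinAt) (fun x hx => ?_) fun x hx => ?_
  all_goals rw [interior_Ico] at hx
  · exact (hg x (Ioo_subset_Ico_self hx)).hasDerivWithinAt
  · exact hg' x hx

lemma hasDerivAt_artanh {x : ℝ} (hx : x ∈ Ioo (-1) 1) :
    HasDerivAt _root_.artanh (1 / (1 - x ^ 2)) x := by
  obtain ⟨h1, h2⟩ := hx
  have hadd : 1 + x ≠ 0 := by linarith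
  have hsub : 1 - x ≠ 0 := by linarith
  have hq : HasDerivAt (fun y => (1 + y) / (1 - y))
      ((1 * (1 - x) - (1 + x) * (-1)) / (1 - x) ^ 2) x :=
    ((hasDerivAt_id x).const_add 1).div ((hasDerivAt_id x).const_sub 1) hsub
  refine ((hq.log (div_pos (by linarith) (by linarith)).ne').const_mul (1 / 2)).congr_deriv ?_
  rw [show 1 - x ^ 2 = (1 + x) * (1 - x) by ring]
  field_simp
  ring

lemma lt_artanh {s : ℝ} (hs : s ∈ Ioo 0 1) : s < _root_.artanh s := by
  have hmono : StrictMonoOn (fun x => _root_.artanh x - x) (Ico 0 1) := by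
    refine strictMonoOn_Ico_of_hasDerivAt_pos
      (fun x hx => (hasDerivAt_artanh ⟨by linarith [hx.1], hx.2⟩).sub (hasDerivAt_id x))
      fun x hx => ?_
    have hx2 : 0 < 1 - x ^ 2 := by nlinarith [hx.1, hx.2]
    exact sub_pos.2 ((one_lt_div hx2).2 (by nlinarith [hx.1]))
  simpa [_root_.artanh] using hmono (left_mem_Ico.2 one_pos) (Ioo_subset_Ico_self hs) hs.1

lemma artanh_lt_div {s : ℝ} (hs : s ∈ Ioo 0 1) : _root_.artanh s < s / (1 - s ^ 2) := by
  have hmono : StrictMonoOn (fun x => x / (1 - x ^ 2) - _root_.artanh x) (Ico 0 1) := by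
    refine strictMonoOn_Ico_of_hasDerivAt_pos (g' := fun x => 2 * x ^ 2 / (1 - x ^ 2) ^ 2)
      (fun x hx => ?_) fun x hx =>
        div_pos (by nlinarith [hx.1]) (pow_pos (by nlinarith [hx.1, hx.2]) 2)
    have hx2 : 1 - x ^ 2 ≠ 0 := by nlinarith [hx.1, hx.2]
    refine (((hasDerivAt_id' x).div ((hasDerivAt_pow 2 x).const_sub 1) hx2).sub
      (hasDerivAt_artanh ⟨by linarith [hx.1], hx.2⟩)).congr_deriv ?_
    field_simp
    ring
  simpa [_root_.artanh] using hmono (left_mem_Ico.2 one_pos) (Ioo_subset_Ico_self hs) hs.1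

lemma sqrt_one_sub_four_mul_mem {l : ℝ} (hl : l ∈ Ioo 0 (1 / 4)) : √(1 - 4 * l) ∈ Ioo 0 1 :=
  ⟨sqrt_pos.2 (by linarith [hl.2]), (sqrt_lt' one_pos).2 (by linarith [hl.1])⟩

lemma thetaF_add_one (l : ℝ) : thetaF l + 1 = _root_.artanh √(1 - 4 * l) / √(1 - 4 * l) := by
  rw [thetaF]
  ring

lemma thetaF_pos {l : ℝ} (hl : l ∈ Ioo 0 (1 / 4)) : 0 < thetaF l := by
  have hs := sqrt_one_sub_four_mul_mem hl
  have := (one_lt_div hs.1).2 (lt_artanh hs)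
  linarith [thetaF_add_one l]

lemma four_mul_mul_thetaF_add_one_lt_one {l : ℝ} (hl : l ∈ Ioo 0 (1 / 4)) :
    4 * l * (thetaF l + 1) < 1 := by
  have hs := sqrt_one_sub_four_mul_mem hl
  have h := artanh_lt_div hs
  rw [sq_sqrt (by linarith [hl.2]), sub_sub_cancel, lt_div_iff₀ (by linarith [hl.1])] at h
  rw [thetaF_add_one, mul_div_assoc', div_lt_one hs.1]
  linarith

lemma hasDerivAt_thetaF {l : ℝ} (hl : l ∈ Ioo 0 (1 / 4)) :
    HasDerivAt thetaF ((4 * l * (thetaF l + 1) - 1) / (2 * l * (1 - 4 * l))) l := by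
  have hl0 := hl.1.ne'
  have hl4 : 1 - 4 * l ≠ 0 := by linarith [hl.2]
  have hs := sqrt_one_sub_four_mul_mem hl
  have hs0 := hs.1.ne'
  have hsqrt := (((hasDerivAt_id' l).const_mul 4).const_sub 1).sqrt hl4
  have hquot := (hasDerivAt_artanh ⟨by linarith [hs.1], hs.2⟩).div (hasDerivAt_id' _) hs0
  refine ((hquot.comp l hsqrt).const_add (-1)).congr_deriv ?_
  rw [thetaF_add_one, sq_sqrt (by linarith [hl.2]), sub_sub_cancel]
  field_simp
  ring

lemma thetaF_deriv_neg {l : ℝ} (hl : l ∈ Ioo 0 (1 / 4)) :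
    (4 * l * (thetaF l + 1) - 1) / (2 * l * (1 - 4 * l)) < 0 :=
  div_neg_of_neg_of_pos (sub_neg.2 (four_mul_mul_thetaF_add_one_lt_one hl))
    (mul_pos (by linarith [hl.1]) (by linarith [hl.2]))

lemma strictAntiOn_thetaF : StrictAntiOn thetaF (Ioo 0 (1 / 4)) := by
  refine strictAntiOn_of_hasDerivWithinAt_neg
    (f' := fun l => (4 * l * (thetaF l + 1) - 1) / (2 * l * (1 - 4 * l))) (convex_Ioo 0 (1 / 4))
    (fun l hl => (hasDerivAt_thetaF hl).continuousAt.continuousWithinAt)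
    (fun l hl => ?_) fun l hl => ?_
  all_goals rw [interior_Ioo] at hl
  · exact (hasDerivAt_thetaF hl).hasDerivWithinAt
  · exact thetaF_deriv_neg hl

def IsThetaFInverse (lam : ℝ → ℝ) : Prop :=
  ∀ θ > (0:ℝ), lam θ ∈ Ioo 0 (1 / 4) ∧ thetaF (lam θ) = θ

namespace IsThetaFInverse

variable {lam : ℝ → ℝ}

lemma strictAntiOn (h : IsThetaFInverse lam) : StrictAntiOn lam (Ioi 0) := fun a ha b hb hab =>
  (strictAntiOn_thetaF.lt_iff_gt (h a ha).1 (h b hb).1).1 (by rwa [(h a ha).2, (h b hb).2])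

lemma apply_thetaF (h : IsThetaFInverse lam) {l : ℝ} (hl : l ∈ Ioo 0 (1 / 4)) :
    lam (thetaF l) = l :=
  strictAntiOn_thetaF.injOn (h _ (thetaF_pos hl)).1 hl (h _ (thetaF_pos hl)).2

-- `λ` is monotone and onto `(0, 1/4)`, so it cannot jump.
lemma continuousAt (h : IsThetaFInverse lam) {θ : ℝ} (hθ : 0 < θ) : ContinuousAt lam θ := by
  have hmono : StrictMonoOn (fun t => -lam t) (Ioi 0) := fun a ha b hb hab =>
    neg_lt_neg (h.strictAntiOn ha hb hab)
  have himage : Ioo (-(1 / 4)) 0 ⊆ (fun t => -lam t) '' Ioi 0 := fun y hy =>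
    have hy' : -y ∈ Ioo 0 (1 / 4) := ⟨by linarith [hy.2], by linarith [hy.1]⟩
    ⟨thetaF (-y), thetaF_pos hy', by simp [h.apply_thetaF hy']⟩
  have hl := (h θ hθ).1
  have hneg := hmono.continuousAt_of_image_mem_nhds (Ioi_mem_nhds hθ) <|
    mem_of_superset (Ioo_mem_nhds (by linarith [hl.2]) (by linarith [hl.1])) himage
  simpa only [Pi.neg_def, neg_neg] using hneg.neg

lemma hasDerivAt (h : IsThetaFInverse lam) {θ : ℝ} (hθ : 0 < θ) :
    HasDerivAt lam (2 * lam θ * (1 - 4 * lam θ) / (4 * lam θ * (θ + 1) - 1)) θ := by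
  obtain ⟨hl, hθl⟩ := h θ hθ
  have := (hasDerivAt_thetaF hl).of_local_left_inverse (h.continuousAt hθ)
    (thetaF_deriv_neg hl).ne (eventually_of_mem (Ioi_mem_nhds hθ) fun t ht => (h t ht).2)
  rwa [hθl, inv_div] at this

lemma deriv_mul_eq (h : IsThetaFInverse lam) {θ : ℝ} (hθ : 0 < θ) :
    deriv lam θ * (4 * lam θ * (θ + 1) - 1) = 2 * lam θ * (1 - 4 * lam θ) := by
  obtain ⟨hl, hθl⟩ := h θ hθ
  have hlt := four_mul_mul_thetaF_add_one_lt_one hl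
  rw [hθl] at hlt
  rw [(h.hasDerivAt hθ).deriv]
  exact div_mul_cancel₀ _ (sub_neg.2 hlt).ne

end IsThetaFInverse

lemma hasDerivAt_neg_log_sub_two_mul_sub_mul_log {lam : ℝ → ℝ} {θ L : ℝ}
    (hL : HasDerivAt lam L θ) (h0 : lam θ ≠ 0) (h4 : 1 - 4 * lam θ ≠ 0)
    (hkey : L * (4 * lam θ * (θ + 1) - 1) = 2 * lam θ * (1 - 4 * lam θ)) :
    HasDerivAt (fun t => -log (lam t) - 2 * t - t * log (1 - 4 * lam t))
      (-log (1 - 4 * lam θ)) θ := by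
  have h := ((hL.log h0).neg.sub ((hasDerivAt_id' θ).const_mul 2)).sub
    ((hasDerivAt_id' θ).mul (((hL.const_mul 4).const_sub 1).log h4))
  have hsum : L / lam θ + 2 = 4 * θ * L / (1 - 4 * lam θ) := by
    rw [div_add' _ _ _ h0, div_eq_div_iff h0 h4]
    linear_combination -hkey
  exact h.congr_deriv (by linear_combination -hsum)

theorem stmt12 (lam : ℝ → ℝ)
    (hmem : ∀ θ > (0:ℝ), lam θ ∈ Set.Ioo (0:ℝ) (1/4))
    (hinv : ∀ θ > (0:ℝ), thetaF (lam θ) = θ)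
    (f : ℝ → ℝ)
    (hf : ∀ θ, f θ = -Real.log (lam θ) - 2*θ - θ * Real.log (1 - 4 * lam θ)) :
    ∀ θ > (0:ℝ),
      deriv (deriv f) θ = 4 * deriv lam θ / (1 - 4 * lam θ) ∧
      θ * deriv (deriv f) θ = 2 + deriv lam θ / lam θ := by
  have hlam : IsThetaFInverse lam := fun θ hθ => ⟨hmem θ hθ, hinv θ hθ⟩
  have hdlam {θ} (hθ : 0 < θ) : HasDerivAt lam (deriv lam θ) θ :=
    (hlam.hasDerivAt hθ).differentiableAt.hasDerivAt
  have hdf {θ} (hθ : 0 < θ) : HasDerivAt f (-log (1 - 4 * lam θ)) θ := by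
    rw [funext hf]
    exact hasDerivAt_neg_log_sub_two_mul_sub_mul_log (hdlam hθ) (hmem θ hθ).1.ne'
      (by linarith [(hmem θ hθ).2]) (hlam.deriv_mul_eq hθ)
  intro θ hθ
  have h4 : 1 - 4 * lam θ ≠ 0 := by linarith [(hmem θ hθ).2]
  have hd2f : HasDerivAt (deriv f) (4 * deriv lam θ / (1 - 4 * lam θ)) θ := by
    refine ((((hdlam hθ).const_mul 4).const_sub 1).log h4).neg.congr_deriv (by ring)
      |>.congr_of_eventuallyEq ?_
    filter_upwards [Ioi_mem_nhds hθ] with t ht using (hdf ht).deriv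
  rw [hd2f.deriv]
  refine ⟨rfl, ?_⟩
  have h0 := (hmem θ hθ).1.ne'
  field_simp
  linear_combination hlam.deriv_mul_eq hθ
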